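/- arXiv:0805.0141 — 2 statements merged into one kernel-verified Lean document; each statement's English description precedes it below -/
import Mathlib

section
/- Let f be a C¹ quaternionic function on an open set Ω ⊆ H disjoint from the real axis, and define u := (1/2)(∂/∂ι)(ιf) and v := (1/2)(∂/∂ι)(f). Then f = u + ιv, and f is left-Cullen-regular if and only if D_l f = −2v/r and D_l(ιf) = −2u/r on Ω. -/
/-!
Write `C = ∂/∂t + ι∂/∂r`. At a point `p` with `ι = ι(p)` and `L = df_p`, the anticommutators
`eₖι + ιeₖ = −2⟨eₖ, ι⟩` collapse `Σₖ eₖ ι L eₖ + ι Σₖ eₖ L eₖ` to `2(ι L 1 − L ι) = 2ι C f`.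
Since `ι` is constant along `1` and `ι` and `D_l ι = −2/r`, the Leibniz rule gives
`C(ιf) = ι C f` and `D_l(ιf) + ι D_l f = 2ι C f − (2/r) f`. As `∂/∂ι = r(C − D_l)`, the latter is
`(∂/∂ι)(ιf) + ι (∂/∂ι) f = 2f`, i.e. `f = u + ιv`, while each equation `D_l g = −(1/r)(∂/∂ι) g`
just says `C g = 0`; for `g = ιf` this follows from `C f = 0`.
-/

/-- The quaternion unit `i`. -/
noncomputable def qI : Quaternion ℝ := ⟨0, 1, 0, 0⟩

/-- The quaternion unit `j`. -/
noncomputable def qJ : Quaternion ℝ := ⟨0, 0, 1, 0⟩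

/-- The quaternion unit `k`. -/
noncomputable def qK : Quaternion ℝ := ⟨0, 0, 0, 1⟩

/-- The unit imaginary part `ι(p) = Im p / ‖Im p‖`. -/
noncomputable def iotaOf (p : Quaternion ℝ) : Quaternion ℝ := (‖p.im‖)⁻¹ • p.im

/-- The left-Fueter operator `D_l = ∂/∂t + i ∂/∂x + j ∂/∂y + k ∂/∂z`. -/
noncomputable def fueterL (f : Quaternion ℝ → Quaternion ℝ) (p : Quaternion ℝ) :
    Quaternion ℝ :=
  fderiv ℝ f p 1 + qI * fderiv ℝ f p qI
    + qJ * fderiv ℝ f p qJ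
    + qK * fderiv ℝ f p qK

/-- The Cullen operator `∂/∂t + ι ∂/∂r` in the slice coordinates `p = t + rι`. -/
noncomputable def cullenOp (f : Quaternion ℝ → Quaternion ℝ) (p : Quaternion ℝ) :
    Quaternion ℝ :=
  fderiv ℝ f p 1 + iotaOf p * fderiv ℝ f p (iotaOf p)

/-- The angular operator `∂/∂ι`, defined off the real axis via the
decomposition `D_l = ∂/∂t + ι ∂/∂r − (1/r) ∂/∂ι`. -/
noncomputable def angularOp (f : Quaternion ℝ → Quaternion ℝ) (p : Quaternion ℝ) :
    Quaternion ℝ :=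
  ‖p.im‖ • (cullenOp f p - fueterL f p)

open RealInnerProductSpace

section Normalize
variable {F : Type*} [NormedAddCommGroup F] [InnerProductSpace ℝ F] {x : F}

theorem hasFDerivAt_norm_of_ne_zero (hx : x ≠ 0) :
    HasFDerivAt (‖·‖) (‖x‖⁻¹ • innerSL ℝ x) x := by
  have hr : ‖x‖ ≠ 0 := norm_ne_zero_iff.mpr hx
  have h := (hasStrictFDerivAt_norm_sq x).hasFDerivAt.sqrt (pow_ne_zero 2 hr)
  simp only [Real.sqrt_sq (norm_nonneg _)] at h
  refine h.congr_fderiv ?_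
  ext w
  simp only [one_div, mul_inv_rev, smul_apply, coe_innerSL_apply, nsmul_eq_mul, Nat.cast_ofNat,
    smul_eq_mul]
  field_simp

theorem hasFDerivAt_inv_norm_smul_self (hx : x ≠ 0) :
    HasFDerivAt (fun y : F => ‖y‖⁻¹ • y)
      (‖x‖⁻¹ • (ContinuousLinearMap.id ℝ F -
        (innerSL ℝ (‖x‖⁻¹ • x)).smulRight (‖x‖⁻¹ • x))) x := by
  have hr : ‖x‖ ≠ 0 := norm_ne_zero_iff.mpr hx
  have h : HasFDerivAt (fun y : F => ‖y‖⁻¹ • y) _ x :=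
    ((hasDerivAt_inv hr).comp_hasFDerivAt x (hasFDerivAt_norm_of_ne_zero hx)).smul
      (hasFDerivAt_id x)
  refine h.congr_fderiv ?_
  ext w
  simp only [Function.comp_apply, neg_smul, add_apply, smul_apply, ContinuousLinearMap.id_apply,
    ContinuousLinearMap.smulRight_apply, neg_apply, coe_innerSL_apply, smul_eq_mul, map_smul,
    sub_apply]
  module

end Normalize

open Quaternion

section ImaginaryUnits

@[simp] theorem re_qI : qI.re = 0 := rfl
@[simp] theorem imI_qI : qI.imI = 1 := rfl
@[simp] theorem imJ_qI : qI.imJ = 0 := rfl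
@[simp] theorem imK_qI : qI.imK = 0 := rfl
@[simp] theorem re_qJ : qJ.re = 0 := rfl
@[simp] theorem imI_qJ : qJ.imI = 0 := rfl
@[simp] theorem imJ_qJ : qJ.imJ = 1 := rfl
@[simp] theorem imK_qJ : qJ.imK = 0 := rfl
@[simp] theorem re_qK : qK.re = 0 := rfl
@[simp] theorem imI_qK : qK.imI = 0 := rfl
@[simp] theorem imJ_qK : qK.imJ = 0 := rfl
@[simp] theorem imK_qK : qK.imK = 1 := rfl

theorem mul_add_mul_swap_of_re_eq_zero {a b : ℍ[ℝ]} (ha : a.re = 0) (hb : b.re = 0) :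
    a * b + b * a = ((-2 * ⟪a, b⟫ : ℝ) : ℍ[ℝ]) := by
  ext <;> simp [inner_def, ha, hb] <;> ring

theorem inner_qI (q : ℍ[ℝ]) : ⟪qI, q⟫ = q.imI := by simp [inner_def, re_mul]
theorem inner_qJ (q : ℍ[ℝ]) : ⟪qJ, q⟫ = q.imJ := by simp [inner_def, re_mul]
theorem inner_qK (q : ℍ[ℝ]) : ⟪qK, q⟫ = q.imK := by simp [inner_def, re_mul]

theorem qI_mul_self : qI * qI = -1 := by ext <;> simp [re_mul, imI_mul, imJ_mul, imK_mul]
theorem qJ_mul_self : qJ * qJ = -1 := by ext <;> simp [re_mul, imI_mul, imJ_mul, imK_mul]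
theorem qK_mul_self : qK * qK = -1 := by ext <;> simp [re_mul, imI_mul, imJ_mul, imK_mul]

@[simp] theorem im_qI : qI.im = qI := by ext <;> simp
@[simp] theorem im_qJ : qJ.im = qJ := by ext <;> simp
@[simp] theorem im_qK : qK.im = qK := by ext <;> simp

theorem im_eq_sum_smul (q : ℍ[ℝ]) : q.im = q.imI • qI + q.imJ • qJ + q.imK • qK := by
  ext <;> simp

end ImaginaryUnits

noncomputable def imCLM : ℍ[ℝ] →L[ℝ] ℍ[ℝ] :=
  LinearMap.toContinuousLinearMap
    { toFun := Quaternion.im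
      map_add' := im_add
      map_smul' := fun c q => im_smul q c }

theorem re_iotaOf (p : ℍ[ℝ]) : (iotaOf p).re = 0 := by simp [iotaOf]

theorem im_iotaOf (p : ℍ[ℝ]) : (iotaOf p).im = iotaOf p := by simp [iotaOf]

theorem norm_iotaOf {p : ℍ[ℝ]} (hp : p.im ≠ 0) : ‖iotaOf p‖ = 1 := by
  rw [iotaOf, norm_smul, norm_inv, norm_norm, inv_mul_cancel₀ (norm_ne_zero_iff.mpr hp)]

theorem inner_iotaOf_self {p : ℍ[ℝ]} (hp : p.im ≠ 0) : ⟪iotaOf p, iotaOf p⟫ = 1 := by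
  rw [real_inner_self_eq_norm_sq, norm_iotaOf hp, one_pow]

theorem iotaOf_mul_self {p : ℍ[ℝ]} (hp : p.im ≠ 0) : iotaOf p * iotaOf p = -1 := by
  have h := mul_add_mul_swap_of_re_eq_zero (re_iotaOf p) (re_iotaOf p)
  rw [inner_iotaOf_self hp, ← two_smul ℝ, show ((-2 * 1 : ℝ) : ℍ[ℝ]) = (2 : ℝ) • (-1) by
    rw [smul_neg, ← coe_mul_eq_smul]; norm_num] at h
  exact smul_right_injective _ two_ne_zero h

theorem hasFDerivAt_iotaOf {p : ℍ[ℝ]} (hp : p.im ≠ 0) :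
    HasFDerivAt iotaOf (‖p.im‖⁻¹ • (imCLM -
      ((innerSL ℝ (iotaOf p)).comp imCLM).smulRight (iotaOf p))) p := by
  have h := (hasFDerivAt_inv_norm_smul_self hp).comp p imCLM.hasFDerivAt
  exact h.congr_fderiv (by ext w <;> simp [iotaOf, imCLM])

theorem differentiableAt_iotaOf {p : ℍ[ℝ]} (hp : p.im ≠ 0) : DifferentiableAt ℝ iotaOf p :=
  (hasFDerivAt_iotaOf hp).differentiableAt

theorem fderiv_iotaOf_apply {p : ℍ[ℝ]} (hp : p.im ≠ 0) (w : ℍ[ℝ]) :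
    fderiv ℝ iotaOf p w = ‖p.im‖⁻¹ • (w.im - ⟪iotaOf p, w.im⟫ • iotaOf p) := by
  simp [(hasFDerivAt_iotaOf hp).fderiv, imCLM]

theorem fderiv_iotaOf_one {p : ℍ[ℝ]} (hp : p.im ≠ 0) : fderiv ℝ iotaOf p 1 = 0 := by
  simp [fderiv_iotaOf_apply hp]

theorem fderiv_iotaOf_self {p : ℍ[ℝ]} (hp : p.im ≠ 0) : fderiv ℝ iotaOf p (iotaOf p) = 0 := by
  simp [fderiv_iotaOf_apply hp, im_iotaOf, norm_iotaOf hp]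

theorem fueterL_iotaOf {p : ℍ[ℝ]} (hp : p.im ≠ 0) :
    fueterL iotaOf p = (-2 / ‖p.im‖) • 1 := by
  have hsum : ⟪iotaOf p, qI⟫ • qI + ⟪iotaOf p, qJ⟫ • qJ + ⟪iotaOf p, qK⟫ • qK = iotaOf p := by
    rw [real_inner_comm qI, real_inner_comm qJ, real_inner_comm qK, inner_qI, inner_qJ, inner_qK,
      ← im_eq_sum_smul, im_iotaOf]
  calc fueterL iotaOf p
      = ‖p.im‖⁻¹ • (qI * qI + qJ * qJ + qK * qK -
          (⟪iotaOf p, qI⟫ • qI + ⟪iotaOf p, qJ⟫ • qJ + ⟪iotaOf p, qK⟫ • qK) * iotaOf p) := by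
        simp only [fueterL, fderiv_iotaOf_one hp, fderiv_iotaOf_apply hp, im_qI, im_qJ, im_qK,
          mul_smul_comm, mul_sub, add_mul, smul_mul_assoc, zero_add]
        module
    _ = (-2 / ‖p.im‖) • 1 := by
        rw [hsum, iotaOf_mul_self hp, qI_mul_self, qJ_mul_self, qK_mul_self]
        module

noncomputable def fueterSum (L : ℍ[ℝ] →L[ℝ] ℍ[ℝ]) : ℍ[ℝ] :=
  L 1 + qI * L qI + qJ * L qJ + qK * L qK

theorem fueterL_eq_fueterSum (f : ℍ[ℝ] → ℍ[ℝ]) (p : ℍ[ℝ]) :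
    fueterL f p = fueterSum (fderiv ℝ f p) := rfl

theorem fueterSum_smul_add_mul_fueterSum {q : ℍ[ℝ]} (hq : q.re = 0) (L : ℍ[ℝ] →L[ℝ] ℍ[ℝ]) :
    fueterSum (q • L) + q * fueterSum L = (2 : ℝ) • (q * L 1 - L q) := by
  have hI : qI * q + q * qI = ((-2 * q.imI : ℝ) : ℍ[ℝ]) :=
    inner_qI q ▸ mul_add_mul_swap_of_re_eq_zero re_qI hq
  have hJ : qJ * q + q * qJ = ((-2 * q.imJ : ℝ) : ℍ[ℝ]) :=
    inner_qJ q ▸ mul_add_mul_swap_of_re_eq_zero re_qJ hq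
  have hK : qK * q + q * qK = ((-2 * q.imK : ℝ) : ℍ[ℝ]) :=
    inner_qK q ▸ mul_add_mul_swap_of_re_eq_zero re_qK hq
  have hLq : L q = q.imI • L qI + q.imJ • L qJ + q.imK • L qK := by
    rw [← re_add_im q, hq, coe_zero, zero_add, im_eq_sum_smul]
    simp
  calc fueterSum (q • L) + q * fueterSum L
      = q * L 1 + q * L 1 + (qI * q + q * qI) * L qI + (qJ * q + q * qJ) * L qJ
          + (qK * q + q * qK) * L qK := by
        simp only [fueterSum, smul_apply, smul_eq_mul]
        noncomm_ring
    _ = (2 : ℝ) • (q * L 1 - L q) := by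
        rw [hI, hJ, hK, hLq, coe_mul_eq_smul, coe_mul_eq_smul, coe_mul_eq_smul]
        module

theorem fueterL_mul {f g : ℍ[ℝ] → ℍ[ℝ]} {p : ℍ[ℝ]} (hg : DifferentiableAt ℝ g p)
    (hf : DifferentiableAt ℝ f p) :
    fueterL (fun q => g q * f q) p = fueterSum (g p • fderiv ℝ f p) + fueterL g p * f p := by
  simp only [fueterL, fueterSum, fderiv_fun_mul' hg hf, add_apply, smul_apply, smul_eq_mul,
    MulOpposite.smul_eq_mul_unop, MulOpposite.unop_op]
  noncomm_ring

section IotaMul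

variable {f : ℍ[ℝ] → ℍ[ℝ]} {p : ℍ[ℝ]}

theorem cullenOp_iotaOf_mul (hp : p.im ≠ 0) (hf : DifferentiableAt ℝ f p) :
    cullenOp (fun q => iotaOf q * f q) p = iotaOf p * cullenOp f p := by
  simp only [cullenOp, fderiv_fun_mul' (differentiableAt_iotaOf hp) hf]
  simp [fderiv_iotaOf_one hp, fderiv_iotaOf_self hp, mul_add]

theorem fueterL_iotaOf_mul_add (hp : p.im ≠ 0) (hf : DifferentiableAt ℝ f p) :
    fueterL (fun q => iotaOf q * f q) p + iotaOf p * fueterL f p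
      = (2 : ℝ) • (iotaOf p * cullenOp f p - ‖p.im‖⁻¹ • f p) := by
  have hιι : iotaOf p * (iotaOf p * fderiv ℝ f p (iotaOf p)) = -fderiv ℝ f p (iotaOf p) := by
    rw [← mul_assoc, iotaOf_mul_self hp, neg_one_mul]
  rw [fueterL_mul (differentiableAt_iotaOf hp) hf, fueterL_iotaOf hp, add_right_comm,
    fueterL_eq_fueterSum, fueterSum_smul_add_mul_fueterSum (re_iotaOf p), cullenOp, mul_add, hιι,
    smul_mul_assoc, one_mul, div_eq_mul_inv]
  module

theorem angularOp_iotaOf_mul_add (hp : p.im ≠ 0) (hf : DifferentiableAt ℝ f p) :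
    angularOp (fun q => iotaOf q * f q) p + iotaOf p * angularOp f p = (2 : ℝ) • f p := by
  have hr : ‖p.im‖ ≠ 0 := norm_ne_zero_iff.mpr hp
  calc angularOp (fun q => iotaOf q * f q) p + iotaOf p * angularOp f p
      = ‖p.im‖ • ((2 : ℝ) • (iotaOf p * cullenOp f p)
          - (fueterL (fun q => iotaOf q * f q) p + iotaOf p * fueterL f p)) := by
        simp only [angularOp, cullenOp_iotaOf_mul hp hf, mul_smul_comm, mul_sub]
        module
    _ = (2 : ℝ) • f p := by
        rw [fueterL_iotaOf_mul_add hp hf, ← smul_sub, sub_sub_cancel, smul_smul, smul_smul,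
          mul_comm _ (2 : ℝ), mul_assoc, mul_inv_cancel₀ hr, mul_one]

end IotaMul

theorem fueterL_eq_iff_cullenOp_eq_zero {g : ℍ[ℝ] → ℍ[ℝ]} {p : ℍ[ℝ]} (hp : p.im ≠ 0) :
    fueterL g p = (-2 / ‖p.im‖) • ((1 / 2 : ℝ) • angularOp g p) ↔ cullenOp g p = 0 := by
  have hr : ‖p.im‖ ≠ 0 := norm_ne_zero_iff.mpr hp
  rw [angularOp, smul_smul, smul_smul, show -2 / ‖p.im‖ * (1 / 2) * ‖p.im‖ = -1 by field_simp,
    neg_one_smul, neg_sub, eq_comm, sub_eq_self]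

/-- For `f` of class `C¹` on an open set `Ω` off the real axis, with
`u := (1/2)(∂/∂ι)(ι f)` and `v := (1/2)(∂/∂ι) f`, one has `f = u + ι v`, and `f`
is left-Cullen-regular iff `D_l f = −2v/r` and `D_l(ι f) = −2u/r` on `Ω`. -/
theorem cullenRegular_iff_fueter_eqs
    (Ω : Set (Quaternion ℝ)) (hΩ : IsOpen Ω) (hax : ∀ p ∈ Ω, p.im ≠ 0)
    (f : Quaternion ℝ → Quaternion ℝ) (hf : ContDiffOn ℝ 1 f Ω)
    (u v : Quaternion ℝ → Quaternion ℝ)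
    (hu : ∀ p, u p = (1 / 2 : ℝ) • angularOp (fun q => iotaOf q * f q) p)
    (hv : ∀ p, v p = (1 / 2 : ℝ) • angularOp f p) :
    (∀ p ∈ Ω, f p = u p + iotaOf p * v p) ∧
      ((∀ p ∈ Ω, cullenOp f p = 0) ↔
        ∀ p ∈ Ω, fueterL f p = (-2 / ‖p.im‖) • v p ∧
          fueterL (fun q => iotaOf q * f q) p = (-2 / ‖p.im‖) • u p) := by
  have hdiff : ∀ p ∈ Ω, DifferentiableAt ℝ f p := fun p hp =>
    (hf.differentiableOn one_ne_zero).differentiableAt (hΩ.mem_nhds hp)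
  refine ⟨fun p hp => ?_, ⟨fun h p hp => ?_, fun h p hp => ?_⟩⟩
  · rw [hu, hv, mul_smul_comm, ← smul_add, angularOp_iotaOf_mul_add (hax p hp) (hdiff p hp),
      smul_smul]
    norm_num
  · rw [hu, hv, fueterL_eq_iff_cullenOp_eq_zero (hax p hp),
      fueterL_eq_iff_cullenOp_eq_zero (hax p hp), cullenOp_iotaOf_mul (hax p hp) (hdiff p hp),
      h p hp, mul_zero]
    exact ⟨rfl, rfl⟩
  · exact (fueterL_eq_iff_cullenOp_eq_zero (hax p hp)).1 (hv p ▸ (h p hp).1)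
end

section
/- For any purely imaginary unit quaternion ι and any n ∈ ℕ, the function F : H → H defined (using slice coordinates) by F(t + rι') := (t + rι')ⁿ for the slice ι' = ι, i.e., the quaternionic power function p ↦ pⁿ, satisfies D_l Δ (pⁿ) = 0 on H, where Δ is the four-dimensional Laplacian and D_l the left-Fueter operator (Fueter's theorem for polynomials). -/
/-- The four-dimensional Laplacian `Δ = ∂²/∂t² + ∂²/∂x² + ∂²/∂y² + ∂²/∂z²`. -/
noncomputable def quatLaplacian (f : Quaternion ℝ → Quaternion ℝ)
    (p : Quaternion ℝ) : Quaternion ℝ :=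
  fderiv ℝ (fun q => fderiv ℝ f q 1) p 1
    + fderiv ℝ (fun q => fderiv ℝ f q qI) p qI
    + fderiv ℝ (fun q => fderiv ℝ f q qJ) p qJ
    + fderiv ℝ (fun q => fderiv ℝ f q qK) p qK

open Finset
open scoped Quaternion

instance {R : Type*} [CommRing R] [StarRing R] [TrivialStar R] : StarModule R ℍ[R] :=
  ⟨fun r a => by ext <;> simp⟩

attribute [local fun_prop] Differentiable.star

section StarNormal

variable {R : Type*} [Ring R] [StarRing R]

def conjGeomSum (n : ℕ) (x : R) : R := ∑ i ∈ range n, x ^ i * star x ^ (n - 1 - i)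

def weightedConjGeomSum (n : ℕ) (x : R) : R :=
  ∑ j ∈ range n, conjGeomSum j x * x ^ (n - 1 - j)

theorem conjGeomSum_succ (n : ℕ) (x : R) :
    conjGeomSum (n + 1) x = conjGeomSum n x * star x + x ^ n := by
  rw [conjGeomSum, sum_range_succ, conjGeomSum, sum_mul]
  congr 1
  · refine sum_congr rfl fun i hi => ?_
    rw [mul_assoc, ← pow_succ, show n + 1 - 1 - i = n - 1 - i + 1 by grind]
  · simp

theorem weightedConjGeomSum_succ (n : ℕ) (x : R) :
    weightedConjGeomSum (n + 1) x = weightedConjGeomSum n x * x + conjGeomSum n x := by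
  rw [weightedConjGeomSum, sum_range_succ, weightedConjGeomSum, sum_mul]
  congr 1
  · refine sum_congr rfl fun j hj => ?_
    rw [mul_assoc, ← pow_succ, show n + 1 - 1 - j = n - 1 - j + 1 by grind]
  · simp

variable (x : R) [IsStarNormal x]

theorem star_conjGeomSum (n : ℕ) : star (conjGeomSum n x) = conjGeomSum n x := by
  rw [conjGeomSum, star_sum, (star_comm_self (x := x)).symm.geom_sum₂_comm]
  refine sum_congr rfl fun i _ => ?_
  rw [star_mul, star_pow, star_pow, star_star, ((star_comm_self (x := x)).pow_pow _ _).eq]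

theorem commute_conjGeomSum (n : ℕ) : Commute x (conjGeomSum n x) :=
  Commute.sum_right _ _ _ fun i _ =>
    ((Commute.refl x).pow_right i).mul_right ((star_comm_self (x := x)).symm.pow_right _)

theorem conjGeomSum_succ' (n : ℕ) :
    conjGeomSum (n + 1) x = conjGeomSum n x * x + star x ^ n := by
  rw [← star_conjGeomSum, conjGeomSum_succ, star_add, star_mul, star_conjGeomSum, star_star,
    star_pow, (commute_conjGeomSum x n).eq]

theorem commute_weightedConjGeomSum (n : ℕ) : Commute x (weightedConjGeomSum n x) :=
  Commute.sum_right _ _ _ fun j _ =>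
    (commute_conjGeomSum x j).mul_right ((Commute.refl x).pow_right _)

end StarNormal

theorem sum_units_mul_mul_units (a : ℍ[ℝ]) :
    a + qI * a * qI + qJ * a * qJ + qK * a * qK = -2 * star a := by
  rw [neg_mul, two_mul]
  ext <;> simp only [Quaternion.re_mul, Quaternion.imI_mul, Quaternion.imJ_mul,
    Quaternion.imK_mul, Quaternion.re_add, Quaternion.imI_add, Quaternion.imJ_add,
    Quaternion.imK_add] <;> simp [qI, qJ, qK]

theorem sum_units_mul_mul_star_units (a : ℍ[ℝ]) :
    a + qI * a * star qI + qJ * a * star qJ + qK * a * star qK = 2 * (a + star a) := by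
  rw [two_mul]
  ext <;> simp only [Quaternion.re_mul, Quaternion.imI_mul, Quaternion.imJ_mul,
    Quaternion.imK_mul, Quaternion.re_add, Quaternion.imI_add, Quaternion.imJ_add,
    Quaternion.imK_add, Quaternion.re_star, Quaternion.imI_star, Quaternion.imJ_star,
    Quaternion.imK_star] <;> simp [qI, qJ, qK]
  ring

section Calculus

variable {f g : ℍ[ℝ] → ℍ[ℝ]} {p : ℍ[ℝ]}

theorem fderiv_mul_apply (hf : DifferentiableAt ℝ f p) (hg : DifferentiableAt ℝ g p)
    (v : ℍ[ℝ]) :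
    fderiv ℝ (fun q => f q * g q) p v = fderiv ℝ f p v * g p + f p * fderiv ℝ g p v := by
  rw [fderiv_fun_mul' hf hg]
  simp [add_comm]

theorem fueterL_add (hf : DifferentiableAt ℝ f p) (hg : DifferentiableAt ℝ g p) :
    fueterL (fun q => f q + g q) p = fueterL f p + fueterL g p := by
  simp only [fueterL, fderiv_fun_add hf hg, add_apply, mul_add]
  abel

theorem fueterL_const_smul (hf : DifferentiableAt ℝ f p) (c : ℝ) :
    fueterL (fun q => c • f q) p = c • fueterL f p := by
  simp only [fueterL, fderiv_fun_const_smul hf, smul_apply, mul_smul_comm, smul_add]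

theorem fueterL_mul_self (hf : DifferentiableAt ℝ f p) :
    fueterL (fun q => f q * q) p = fueterL f p * p - 2 * star (f p) := by
  have hderiv (v : ℍ[ℝ]) : fderiv ℝ (fun q => f q * q) p v = fderiv ℝ f p v * p + f p * v := by
    simp [fderiv_mul_apply hf differentiableAt_fun_id]
  rw [fueterL, fueterL, hderiv, hderiv, hderiv, hderiv, sub_eq_add_neg, ← neg_mul,
    ← sum_units_mul_mul_units]
  noncomm_ring

theorem fueterL_mul_star (hf : DifferentiableAt ℝ f p) :
    fueterL (fun q => f q * star q) p = fueterL f p * star p + 2 * (f p + star (f p)) := by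
  have hderiv (v : ℍ[ℝ]) :
      fderiv ℝ (fun q => f q * star q) p v = fderiv ℝ f p v * star p + f p * star v := by
    rw [fderiv_mul_apply hf differentiableAt_fun_id.star, fderiv_star (f := fun q => q)]
    simp
  rw [fueterL, fueterL, hderiv, hderiv, hderiv, hderiv, ← sum_units_mul_mul_star_units, star_one]
  noncomm_ring

theorem fderiv_fderiv_self_mul_apply (hf : ContDiff ℝ 2 f) (v : ℍ[ℝ]) :
    fderiv ℝ (fun q => fderiv ℝ (fun w => w * f w) q v) p v
      = 2 * (v * fderiv ℝ f p v) + p * fderiv ℝ (fun q => fderiv ℝ f q v) p v := by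
  have hf1 : Differentiable ℝ f := hf.differentiable (by norm_num)
  have hfv : Differentiable ℝ (fun q => fderiv ℝ f q v) :=
    ((hf.fderiv_right (m := 1) (by norm_num)).differentiable (by norm_num)).clm_apply
      (differentiable_const v)
  have hderiv : (fun q => fderiv ℝ (fun w => w * f w) q v)
      = fun q => v * f q + q * fderiv ℝ f q v := by
    funext q
    simp [fderiv_mul_apply differentiableAt_fun_id (hf1 q)]
  rw [hderiv, fderiv_fun_add (by fun_prop) (by fun_prop), add_apply,
    fderiv_mul_apply (differentiableAt_const v) (hf1 p),
    fderiv_mul_apply differentiableAt_fun_id (hfv p)]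
  simp only [fderiv_const_apply, fderiv_fun_id, zero_apply, ContinuousLinearMap.coe_id', id]
  noncomm_ring

theorem quatLaplacian_self_mul (hf : ContDiff ℝ 2 f) :
    quatLaplacian (fun q => q * f q) p = p * quatLaplacian f p + 2 * fueterL f p := by
  simp only [quatLaplacian, fueterL, fderiv_fderiv_self_mul_apply hf]
  noncomm_ring

end Calculus

@[fun_prop]
theorem differentiable_conjGeomSum (n : ℕ) : Differentiable ℝ (conjGeomSum n : ℍ[ℝ] → ℍ[ℝ]) := by
  unfold conjGeomSum
  fun_prop

@[fun_prop]
theorem differentiable_weightedConjGeomSum (n : ℕ) :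
    Differentiable ℝ (weightedConjGeomSum n : ℍ[ℝ] → ℍ[ℝ]) := by
  unfold weightedConjGeomSum conjGeomSum
  fun_prop

theorem fueterL_pow (n : ℕ) (p : ℍ[ℝ]) :
    fueterL (fun q => q ^ n) p = -2 * conjGeomSum n p := by
  induction n with
  | zero => simp [fueterL, conjGeomSum]
  | succ n ih =>
    simp only [pow_succ]
    rw [fueterL_mul_self (differentiableAt_pow n), ih, conjGeomSum_succ', star_pow]
    noncomm_ring

theorem quatLaplacian_pow (n : ℕ) (p : ℍ[ℝ]) :
    quatLaplacian (fun q => q ^ n) p = -4 * weightedConjGeomSum n p := by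
  induction n with
  | zero => simp [quatLaplacian, weightedConjGeomSum]
  | succ n ih =>
    simp only [pow_succ']
    rw [quatLaplacian_self_mul (by fun_prop), ih, fueterL_pow, weightedConjGeomSum_succ,
      ← (commute_weightedConjGeomSum p n).eq]
    noncomm_ring

theorem fueterL_conjGeomSum (n : ℕ) (p : ℍ[ℝ]) :
    fueterL (conjGeomSum n) p = 2 * star (weightedConjGeomSum n p) := by
  induction n with
  | zero =>
    have hzero : conjGeomSum 0 = fun _ : ℍ[ℝ] => (0 : ℍ[ℝ]) := funext fun _ => sum_range_zero _
    simp [hzero, fueterL, weightedConjGeomSum]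
  | succ n ih =>
    have hsplit : conjGeomSum (n + 1) = fun q : ℍ[ℝ] => conjGeomSum n q * star q + q ^ n :=
      funext (conjGeomSum_succ n)
    rw [hsplit, fueterL_add (by fun_prop) (differentiableAt_pow n),
      fueterL_mul_star (differentiable_conjGeomSum n p), ih, fueterL_pow, star_conjGeomSum,
      weightedConjGeomSum_succ, star_add, star_mul, star_conjGeomSum,
      ((commute_weightedConjGeomSum p n).star_star).eq]
    noncomm_ring

theorem fueterL_weightedConjGeomSum (n : ℕ) (p : ℍ[ℝ]) :
    fueterL (weightedConjGeomSum n) p = 0 := by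
  induction n with
  | zero =>
    have hzero : weightedConjGeomSum 0 = fun _ : ℍ[ℝ] => (0 : ℍ[ℝ]) :=
      funext fun _ => sum_range_zero _
    simp [hzero, fueterL]
  | succ n ih =>
    have hsplit : weightedConjGeomSum (n + 1)
        = fun q : ℍ[ℝ] => weightedConjGeomSum n q * q + conjGeomSum n q :=
      funext (weightedConjGeomSum_succ n)
    rw [hsplit, fueterL_add (by fun_prop) (differentiable_conjGeomSum n p),
      fueterL_mul_self (differentiable_weightedConjGeomSum n p), ih, fueterL_conjGeomSum]
    noncomm_ring

/-- Fueter's theorem for the power functions: `D_l Δ (pⁿ) = 0` on all of `ℍ`. -/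
theorem fueter_laplacian_pow (n : ℕ) (p : Quaternion ℝ) :
    fueterL (fun q => quatLaplacian (fun w => w ^ n) q) p = 0 := by
  have hlap : (fun q => quatLaplacian (fun w => w ^ n) q)
      = fun q => (-4 : ℝ) • weightedConjGeomSum n q := by
    funext q
    rw [quatLaplacian_pow, Algebra.smul_def, map_neg, map_ofNat]
  rw [hlap, fueterL_const_smul (differentiable_weightedConjGeomSum n p),
    fueterL_weightedConjGeomSum, smul_zero]
end
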